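/- Let G be a simple graph on a vertex type V, and let φ', φ : Sym2 V → Fin K be two classifications of edges such that φ'(e) ≤ φ(e) for every edge e of G. Then for every walk w in G, the class-count vector of w under φ' is at most the class-count vector of w under φ in the colex order: θ_{φ'}(w) ≤_colex θ_φ(w). -/

import Mathlib

open scoped NNReal

/-- The colexicographic strict order on `Fin K → ℕ`. -/
def ColexLt {K : ℕ} (a b : Fin K → ℕ) : Prop :=
  ∃ k, a k < b k ∧ ∀ j, k < j → a j = b j

/-- The colexicographic order: `a ≤_colex b` iff `a <_colex b` or `a = b`. -/
def ColexLe {K : ℕ} (a b : Fin K → ℕ) : Prop :=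
  ColexLt a b ∨ a = b

/-- The class-count vector of a walk: `theta G φ w k` is the number of edges of `w`
(with multiplicity) whose class under `φ` is `k`. -/
def theta {V : Type*} {K : ℕ} (G : SimpleGraph V) (φ : Sym2 V → Fin K)
    {s g : V} (w : G.Walk s g) : Fin K → ℕ :=
  fun k => w.edges.countP (fun e => decide (φ e = k))

/-- The total weight of a walk: the sum of `c` over its edges (with multiplicity). -/
def weight {V : Type*} (G : SimpleGraph V) (c : Sym2 V → ℝ≥0)
    {s g : V} (w : G.Walk s g) : ℝ≥0 :=
  (w.edges.map c).sum

/-- The largest class `k` with `theta G φ w k > 0`, for a walk with at least one edge. -/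
def maxClass {V : Type*} {K : ℕ} (G : SimpleGraph V) (φ : Sym2 V → Fin K)
    {s g : V} (w : G.Walk s g) (hw : w.edges ≠ []) : Fin K :=
  (Finset.univ.filter fun k => 0 < theta G φ w k).max' (by
    obtain ⟨e, he⟩ := List.exists_mem_of_ne_nil w.edges hw
    refine ⟨φ e, ?_⟩
    refine Finset.mem_filter.mpr ⟨Finset.mem_univ _, ?_⟩
    show 0 < List.countP (fun x => decide (φ x = φ e)) w.edges
    exact List.countP_pos_iff.mpr ⟨e, he, by simp⟩)

/-- A walk between distinct vertices has at least one edge. -/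
theorem edges_ne_nil_of_ne {V : Type*} {G : SimpleGraph V} {s g : V}
    (h : s ≠ g) (w : G.Walk s g) : w.edges ≠ [] := by
  cases w with
  | nil => exact absurd rfl h
  | cons h' p => simp

/-- Lexicographic order on pairs `(maxClass, count)`. -/
def PairLe {K : ℕ} (p q : Fin K × ℕ) : Prop :=
  p.1 < q.1 ∨ (p.1 = q.1 ∧ p.2 ≤ q.2)

/-- Lexicographic order on keys `(class-count vector, weight)`:
first the colex order on the vectors, then the usual order on weights. -/
def KeyLe {K : ℕ} (p q : (Fin K → ℕ) × ℝ≥0) : Prop :=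
  ColexLt p.1 q.1 ∨ (p.1 = q.1 ∧ p.2 ≤ q.2)


/-! Under the colexicographic order `ℕ^K` is an ordered cancellative monoid, and
`θ_φ(w)` is the sum, over the edges `e` of `w`, of the unit vectors `e_{φ e}`. Since the unit
vectors increase colexicographically with their index, summing the edgewise inequalities
`e_{φ' e} ≤ e_{φ e}` gives the claim. -/

namespace Pi.Colex

variable {ι : Type*} {α : ι → Type*} [LinearOrder ι]

instance isOrderedCancelAddMonoid [∀ i, AddCommMonoid (α i)] [∀ i, PartialOrder (α i)]
    [∀ i, IsOrderedCancelAddMonoid (α i)] :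
    IsOrderedCancelAddMonoid (Colex (∀ i, α i)) :=
  inferInstanceAs (IsOrderedCancelAddMonoid (Lex (∀ i : ιᵒᵈ, α (OrderDual.ofDual i))))

end Pi.Colex

theorem toColex_single_lt_single {ι α : Type*} [LinearOrder ι] [DecidableEq ι] [PartialOrder α]
    [Zero α] {i j : ι} {a : α} (hij : i < j) (ha : 0 < a) :
    toColex (Pi.single i a : ι → α) < toColex (Pi.single j a) :=
  ⟨j, fun k hk => by simp [hk.ne', (hij.trans hk).ne'], by simpa [hij.ne]⟩

theorem toColex_single_le_single {ι α : Type*} [LinearOrder ι] [DecidableEq ι] [PartialOrder α]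
    [Zero α] {i j : ι} {a : α} (hij : i ≤ j) (ha : 0 < a) :
    toColex (Pi.single i a : ι → α) ≤ toColex (Pi.single j a) := by
  rcases hij.lt_or_eq with hij | rfl
  · exact (toColex_single_lt_single hij ha).le
  · rfl

theorem colexLt_iff_toColex_lt {K : ℕ} {a b : Fin K → ℕ} :
    ColexLt a b ↔ toColex a < toColex b :=
  ⟨fun ⟨k, hk, hj⟩ => ⟨k, hj, hk⟩, fun ⟨k, hj, hk⟩ => ⟨k, hk, hj⟩⟩

theorem colexLe_iff_toColex_le {K : ℕ} {a b : Fin K → ℕ} :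
    ColexLe a b ↔ toColex a ≤ toColex b :=
  (or_congr colexLt_iff_toColex_lt toColex_inj.symm).trans le_iff_lt_or_eq.symm

theorem List.countP_eq_sum_single {α ι : Type*} [DecidableEq ι] (f : α → ι) (l : List α) :
    (fun i => l.countP (fun x => decide (f x = i))) = (l.map fun x => Pi.single (f x) 1).sum := by
  induction l with
  | nil => rfl
  | cons x l ih =>
    rw [List.map_cons, List.sum_cons, ← ih]
    ext i
    simp [List.countP_cons, Pi.single_apply, eq_comm, add_comm]

/-- If `φ'` is pointwise at most `φ` on the edges of `G`, then for every walk `w`,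
the class-count vector of `w` under `φ'` is at most that under `φ` in the colex order. -/
theorem theta_mono_colexLe {V : Type*} {K : ℕ}
    (G : SimpleGraph V) (φ' φ : Sym2 V → Fin K)
    (h : ∀ e ∈ G.edgeSet, φ' e ≤ φ e) {s g : V} (w : G.Walk s g) :
    ColexLe (theta G φ' w) (theta G φ w) := by
  unfold theta
  rw [colexLe_iff_toColex_le, List.countP_eq_sum_single, List.countP_eq_sum_single]
  exact List.sum_le_sum fun e he =>
    toColex_single_le_single (h e (w.edges_subset_edgeSet he)) one_pos
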